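/- Let f(x) = φ(x) − arcsin x for x ∈ [0,1], where φ(x) = (π(2 − √2)/(π − 2√2))·(√(1 + x) − √(1 − x)) / (√2(4 − π)/(π − 2√2) + √(1 + x) + √(1 − x)). Then the function t ↦ f(sin t)/(t³(π/2 − t)) tends, as t → (π/2)⁻, to the limit β = ((16√2 − 16) + (8 − 4√2)π − √2·π²)/((2√2 − 2)π³), and moreover β > 0. -/

import Mathlib

open Filter

/-- The upper bound `φ` for `arcsin` obtained by the λ-method of Mitrinović–Vasić. -/
noncomputable def phiBound (x : ℝ) : ℝ :=
  (Real.pi * (2 - Real.sqrt 2) / (Real.pi - 2 * Real.sqrt 2)) *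
      (Real.sqrt (1 + x) - Real.sqrt (1 - x)) /
    (Real.sqrt 2 * (4 - Real.pi) / (Real.pi - 2 * Real.sqrt 2) +
      Real.sqrt (1 + x) + Real.sqrt (1 - x))

/-! With `s = π / 2 - t` we have `sin t = cos s` and `arcsin (sin t) = π / 2 - s`, and the half-angle
formulas turn `√(1 ± cos s)` into `√2 cos (s / 2)` and `√2 sin (s / 2)`. So the numerator is
`G s := ψ s - (π / 2 - s)` for a quotient `ψ` of trigonometric polynomials in `s / 2`, which is
smooth at `0`. The constants of `φ` make `φ 1 = π / 2`, i.e. `G 0 = 0`, hence the quotient tends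
to `G' 0 / (π / 2) ^ 3`. -/

open Real Topology

lemma sqrt_one_add_cos {x : ℝ} (hl : -π ≤ x) (hr : x ≤ π) :
    √(1 + cos x) = √2 * cos (x / 2) := by
  rw [cos_half hl hr, ← sqrt_mul zero_le_two]
  ring_nf

lemma sqrt_one_sub_cos {x : ℝ} (hl : 0 ≤ x) (hr : x ≤ 2 * π) :
    √(1 - cos x) = √2 * sin (x / 2) := by
  rw [sin_half_eq_sqrt hl hr, ← sqrt_mul zero_le_two]
  ring_nf

noncomputable def halfAngleQuot (a b s : ℝ) : ℝ :=
  a * (cos (s / 2) - sin (s / 2)) / (b + cos (s / 2) + sin (s / 2))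

lemma halfAngleQuot_zero (a b : ℝ) : halfAngleQuot a b 0 = a / (b + 1) := by
  simp [halfAngleQuot]

lemma hasDerivAt_halfAngleQuot (a : ℝ) {b : ℝ} (hb : b + 1 ≠ 0) :
    HasDerivAt (halfAngleQuot a b) (-(a * (b + 2)) / (2 * (b + 1) ^ 2)) 0 := by
  have hhalf : HasDerivAt (fun s : ℝ => s / 2) (1 / 2) 0 := (hasDerivAt_id 0).div_const 2
  have hcos := hhalf.cos
  have hsin := hhalf.sin
  have hquot := ((hcos.sub hsin).const_mul a).div ((hcos.const_add b).add hsin)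
    (by simpa using hb)
  refine hquot.congr_deriv ?_
  norm_num
  field_simp
  ring

noncomputable def phiNumCoeff : ℝ := π * (2 - √2) / (π - 2 * √2)

noncomputable def phiDenCoeff : ℝ := (4 - π) / (π - 2 * √2)

lemma phiBound_cos {s : ℝ} (h0 : 0 ≤ s) (hπ : s ≤ π) :
    phiBound (cos s) = halfAngleQuot phiNumCoeff phiDenCoeff s := by
  rw [halfAngleQuot, ← mul_div_mul_left (phiNumCoeff * (cos (s / 2) - sin (s / 2)))
    (phiDenCoeff + cos (s / 2) + sin (s / 2)) (sqrt_ne_zero'.2 zero_lt_two), phiBound,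
    sqrt_one_add_cos (by linarith [pi_pos]) hπ, sqrt_one_sub_cos h0 (by linarith [pi_pos]),
    phiNumCoeff, phiDenCoeff]
  congr 1 <;> ring

lemma two_mul_sqrt_two_lt_pi : 2 * √2 < π := by
  nlinarith [pi_gt_d2, sqrt_two_lt_three_halves]

lemma phiDenCoeff_add_one : phiDenCoeff + 1 = 2 * (2 - √2) / (π - 2 * √2) := by
  have := (sub_pos.2 two_mul_sqrt_two_lt_pi).ne'
  rw [phiDenCoeff]
  field_simp
  ring

lemma phiNumCoeff_div_phiDenCoeff_add_one : phiNumCoeff / (phiDenCoeff + 1) = π / 2 := by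
  have := (sub_pos.2 two_mul_sqrt_two_lt_pi).ne'
  have : 2 - √2 ≠ 0 := (sub_pos.2 (by linarith [sqrt_two_lt_three_halves])).ne'
  rw [phiDenCoeff_add_one, phiNumCoeff]
  field_simp

lemma tendsto_comp_const_sub_div_mul_sub {G h : ℝ → ℝ} {d c : ℝ} (hG : HasDerivAt G d 0)
    (hG0 : G 0 = 0) (hh : ContinuousAt h c) (hc : h c ≠ 0) :
    Tendsto (fun t => G (c - t) / (h t * (c - t))) (𝓝[≠] c) (𝓝 (d / h c)) := by
  have hF : HasDerivAt (fun t => G (c - t)) (-d) c :=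
    HasDerivAt.comp_const_sub c c (by rwa [sub_self])
  have hlim := hF.tendsto_slope.neg.div (hh.mono_left nhdsWithin_le_nhds) hc
  rw [neg_neg] at hlim
  refine hlim.congr' ?_
  filter_upwards [self_mem_nhdsWithin] with t ht
  show -slope _ c t / h t = _
  rw [slope_def_field, sub_self, hG0, sub_zero, ← div_neg, neg_sub, div_div, mul_comm (c - t)]

lemma phiBound_sin_sub_arcsin_sin {t : ℝ} (ht : t ∈ Set.Icc (-(π / 2)) (π / 2)) :
    phiBound (sin t) - arcsin (sin t) =
      halfAngleQuot phiNumCoeff phiDenCoeff (π / 2 - t) - (π / 2 - (π / 2 - t)) := by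
  rw [← cos_pi_div_two_sub, phiBound_cos (by linarith [ht.2]) (by linarith [ht.1]),
    cos_pi_div_two_sub, arcsin_sin ht.1 ht.2, sub_sub_cancel]

lemma phi_limit_value :
    (-(phiNumCoeff * (phiDenCoeff + 2)) / (2 * (phiDenCoeff + 1) ^ 2) + 1) / (π / 2) ^ 3 =
      ((16 * √2 - 16) + (8 - 4 * √2) * π - √2 * π ^ 2) / ((2 * √2 - 2) * π ^ 3) := by
  have hp := (sub_pos.2 two_mul_sqrt_two_lt_pi).ne'
  have h2 : 2 - √2 ≠ 0 := (sub_pos.2 (by linarith [sqrt_two_lt_three_halves])).ne'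
  have h1 : √2 - 1 ≠ 0 := (sub_pos.2 one_lt_sqrt_two).ne'
  have hs : √2 ^ 2 = 2 := sq_sqrt zero_le_two
  rw [show phiDenCoeff + 2 = phiDenCoeff + 1 + 1 by ring, phiDenCoeff_add_one, phiNumCoeff]
  field_simp
  linear_combination (4 * π - π ^ 2) * hs

lemma beta_pos :
    0 < ((16 * √2 - 16) + (8 - 4 * √2) * π - √2 * π ^ 2) / ((2 * √2 - 2) * π ^ 3) := by
  have hs : √2 ^ 2 = 2 := sq_sqrt zero_le_two
  -- the numerator is only about `0.03`, so `√2` and `π` are needed to six decimals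
  have hlo : 1.4142135 < √2 := by nlinarith [sqrt_nonneg 2]
  have hhi : √2 < 1.4142136 := by nlinarith [sqrt_nonneg 2]
  have := pi_gt_d6
  have := pi_lt_d6
  apply div_pos
  · nlinarith
  · exact mul_pos (by linarith) (pow_pos pi_pos 3)

theorem limit_at_pi_div_two :
    Tendsto
      (fun t : ℝ =>
        (phiBound (Real.sin t) - Real.arcsin (Real.sin t)) /
          (t ^ 3 * (Real.pi / 2 - t)))
      (nhdsWithin (Real.pi / 2) (Set.Iio (Real.pi / 2)))
      (nhds (((16 * Real.sqrt 2 - 16) + (8 - 4 * Real.sqrt 2) * Real.pi -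
          Real.sqrt 2 * Real.pi ^ 2) /
        ((2 * Real.sqrt 2 - 2) * Real.pi ^ 3))) ∧
    0 < ((16 * Real.sqrt 2 - 16) + (8 - 4 * Real.sqrt 2) * Real.pi -
          Real.sqrt 2 * Real.pi ^ 2) /
        ((2 * Real.sqrt 2 - 2) * Real.pi ^ 3) := by
  refine ⟨?_, beta_pos⟩
  have hb : phiDenCoeff + 1 ≠ 0 := by
    rw [phiDenCoeff_add_one]
    exact div_ne_zero (by linarith [sqrt_two_lt_three_halves])
      (sub_pos.2 two_mul_sqrt_two_lt_pi).ne'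
  have hG := (hasDerivAt_halfAngleQuot phiNumCoeff hb).sub ((hasDerivAt_id 0).const_sub (π / 2))
  have hlim := tendsto_comp_const_sub_div_mul_sub (c := π / 2) hG
    (by simp [halfAngleQuot_zero, phiNumCoeff_div_phiDenCoeff_add_one])
    (continuous_pow 3).continuousAt (by positivity)
  rw [sub_neg_eq_add, phi_limit_value] at hlim
  refine (hlim.mono_left (nhdsLT_le_nhdsNE _)).congr' ?_
  filter_upwards [Ioo_mem_nhdsLT (neg_lt_self pi_div_two_pos)] with t ht
  rw [phiBound_sin_sub_arcsin_sin (Set.Ioo_subset_Icc_self ht)]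
  rfl
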